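/- Gentle measurement bound (Lemma from Berta et al.): for a subnormalized state ρ and operator 0 ≤ Π ≤ I, the purified distance satisfies P(ρ, ΠρΠ) ≤ (1/√Tr ρ)·√((Tr ρ)² − (Tr(Π²ρ))²). -/

import Mathlib

open Matrix Kronecker
open scoped ComplexOrder

/-- Hypothesis testing quantity `β_ε(ρ‖σ) = (1/ε) min{Tr(Qσ) : 0 ≤ Q ≤ I, Tr(Qρ) ≥ ε}`. -/
noncomputable def betaHT {ι : Type*} [Fintype ι] [DecidableEq ι]
    (ε : ℝ) (ρ σ : Matrix ι ι ℂ) : ℝ :=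
  sInf { r : ℝ | ∃ Q : Matrix ι ι ℂ, Q.PosSemidef ∧ ((1 : Matrix ι ι ℂ) - Q).PosSemidef ∧
    ε ≤ ((Q * ρ).trace).re ∧ r = ((Q * σ).trace).re / ε }

/-- Hypothesis testing relative entropy `D_H^ε(ρ‖σ) = -log₂ β_ε(ρ‖σ)`. -/
noncomputable def DH {ι : Type*} [Fintype ι] [DecidableEq ι]
    (ε : ℝ) (ρ σ : Matrix ι ι ℂ) : ℝ :=
  - Real.logb 2 (betaHT ε ρ σ)

/-- Trace norm `‖A‖₁ = Tr √(AᴴA)`, as the sum of singular values. -/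
noncomputable def traceNorm {ι : Type*} [Fintype ι] [DecidableEq ι] (A : Matrix ι ι ℂ) : ℝ :=
  ∑ i, Real.sqrt ((Matrix.posSemidef_conjTranspose_mul_self A).1.eigenvalues i)

/-- Square root of a positive semidefinite matrix (junk value 0 otherwise). -/
noncomputable def msqrt {ι : Type*} [Fintype ι] [DecidableEq ι]
    (A : Matrix ι ι ℂ) : Matrix ι ι ℂ :=
  @dite _ A.PosSemidef (Classical.dec _) (fun h => h.1.eigenvectorUnitary.1 *
    diagonal ((↑) ∘ Real.sqrt ∘ h.1.eigenvalues) * (star h.1.eigenvectorUnitary : Matrix ι ι ℂ)) (fun _ => 0)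

/-- Generalized fidelity F̄(ρ,σ) = ‖√ρ√σ‖₁ + √((1−Tr ρ)(1−Tr σ)). -/
noncomputable def genFid {ι : Type*} [Fintype ι] [DecidableEq ι]
    (ρ σ : Matrix ι ι ℂ) : ℝ :=
  traceNorm (msqrt ρ * msqrt σ) + Real.sqrt ((1 - ρ.trace.re) * (1 - σ.trace.re))

/-- Purified distance P(ρ,σ) = √(1 − F̄(ρ,σ)²). -/
noncomputable def pDist {ι : Type*} [Fintype ι] [DecidableEq ι]
    (ρ σ : Matrix ι ι ℂ) : ℝ :=
  Real.sqrt (1 - genFid ρ σ ^ 2)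

/-!
Write `t = Tr ρ`, `s = Tr(Π²ρ) = Tr(ΠρΠ)` and `f = Tr(Πρ)`. The matrix `√ρ √(ΠρΠ)` has the same
singular values as the positive matrix `√ρ Π √ρ`, so its trace norm is `Tr(√ρ Π √ρ) = f`.
From `0 ≤ Π ≤ 1` we get `Π² ≤ Π ≤ 1`, hence `s ≤ f` and `s ≤ t`; together with
`√((1 - t)(1 - s)) ≥ 1 - t` this reduces the bound to an elementary inequality in `s` and `t`.
-/

open scoped MatrixOrder
open Polynomial

section
variable {ι : Type*} [Fintype ι] [DecidableEq ι]

theorem msqrt_eq_sqrt {A : Matrix ι ι ℂ} (hA : A.PosSemidef) : msqrt A = CFC.sqrt A := by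
  rw [CFC.sqrt_eq_real_sqrt A hA.nonneg, cfcₙ_eq_cfc, hA.1.cfc_eq, msqrt, dif_pos hA]
  rfl

theorem Matrix.PosSemidef.trace_mul_nonneg {A B : Matrix ι ι ℂ} (hA : A.PosSemidef)
    (hB : B.PosSemidef) : 0 ≤ (A * B).trace.re := by
  have hsqrt : (CFC.sqrt A)ᴴ = CFC.sqrt A := (CFC.sqrt_nonneg A).posSemidef.1
  have hconj : (A * B).trace = (CFC.sqrt A * B * CFC.sqrt A).trace := by
    rw [trace_mul_cycle, CFC.sqrt_mul_sqrt_self A hA.nonneg]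
  have hpos := hB.mul_mul_conjTranspose_same (CFC.sqrt A)
  rw [hsqrt] at hpos
  rw [hconj]
  exact (RCLike.nonneg_iff.mp hpos.trace_nonneg).1

theorem Matrix.PosSemidef.self_sub_sq {P : Matrix ι ι ℂ} (hP : P.PosSemidef)
    (hP1 : (1 - P).PosSemidef) : (P - P ^ 2).PosSemidef := by
  have h := (hP.conjTranspose_mul_mul_same (1 - P)).add (hP1.conjTranspose_mul_mul_same P)
  rwa [conjTranspose_sub, conjTranspose_one, hP.1.eq,
    show (1 - P) * P * (1 - P) + P * (1 - P) * P = P - P ^ 2 by noncomm_ring] at h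

theorem Matrix.IsHermitian.sum_comp_eigenvalues_eq {A : Matrix ι ι ℂ} (hA : A.IsHermitian)
    {μ : ι → ℝ} (h : A.charpoly = ∏ i, (X - C (μ i : ℂ))) (f : ℝ → ℝ) :
    ∑ i, f (hA.eigenvalues i) = ∑ i, f (μ i) := by
  have hroots : Finset.univ.val.map (fun i ↦ (hA.eigenvalues i : ℂ)) =
      Finset.univ.val.map (fun i ↦ (μ i : ℂ)) := by
    have := hA.roots_charpoly_eq_eigenvalues
    rw [h, Polynomial.roots_prod _ _ (by simp [Finset.prod_ne_zero_iff, X_sub_C_ne_zero])] at this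
    simpa [Function.comp_def] using this.symm
  simpa [Multiset.map_map, Function.comp_def] using
    congrArg (fun s ↦ ((s.map Complex.re).map f).sum) hroots

/- `Mᴴ M` and `M Mᴴ = S²` have the same characteristic polynomial, so the singular values of `M`
are the eigenvalues of `S`. -/
theorem traceNorm_eq_trace_of_mul_conjTranspose_eq_sq {M S : Matrix ι ι ℂ} (hS : S.PosSemidef)
    (h : M * Mᴴ = S ^ 2) : traceNorm M = S.trace.re := by
  have hchar : (Mᴴ * M).charpoly = ∏ i, (X - C ((hS.1.eigenvalues i ^ 2 : ℝ) : ℂ)) := by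
    rw [charpoly_mul_comm, h, ← cfc_pow_id (R := ℝ) S 2 hS.1.isSelfAdjoint, hS.1.charpoly_cfc_eq]
    rfl
  rw [traceNorm, Matrix.IsHermitian.sum_comp_eigenvalues_eq _ hchar,
    hS.1.trace_eq_sum_eigenvalues]
  simp [Real.sqrt_sq (hS.eigenvalues_nonneg _)]

theorem traceNorm_msqrt_mul_msqrt_conj {ρ P : Matrix ι ι ℂ} (hρ : ρ.PosSemidef)
    (hP : P.PosSemidef) : traceNorm (msqrt ρ * msqrt (P * ρ * P)) = (P * ρ).trace.re := by
  have hσ : (P * ρ * P).PosSemidef := by simpa [hP.1.eq] using hρ.mul_mul_conjTranspose_same P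
  set r := CFC.sqrt ρ
  set q := CFC.sqrt (P * ρ * P)
  have hr : rᴴ = r := (CFC.sqrt_nonneg ρ).posSemidef.1
  have hq : qᴴ = q := (CFC.sqrt_nonneg _).posSemidef.1
  have hrr : r * r = ρ := CFC.sqrt_mul_sqrt_self ρ hρ.nonneg
  have hqq : q * q = P * ρ * P := CFC.sqrt_mul_sqrt_self _ hσ.nonneg
  have hS : (r * P * r).PosSemidef := by simpa [hr] using hP.conjTranspose_mul_mul_same r
  rw [msqrt_eq_sqrt hρ, msqrt_eq_sqrt hσ,
    traceNorm_eq_trace_of_mul_conjTranspose_eq_sq (S := r * P * r) hS, trace_mul_cycle, hrr,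
    trace_mul_comm]
  calc r * q * (r * q)ᴴ = r * (q * q) * r := by simp only [conjTranspose_mul, hr, hq, mul_assoc]
    _ = (r * P * r) ^ 2 := by rw [hqq, ← hrr]; noncomm_ring

end

theorem Real.sqrt_one_sub_sq_add_sqrt_le {s f t : ℝ} (hs : 0 ≤ s) (hsf : s ≤ f) (hst : s ≤ t)
    (ht : 0 < t) (ht1 : t ≤ 1) :
    √(1 - (f + √((1 - t) * (1 - s))) ^ 2) ≤ 1 / √t * √(t ^ 2 - s ^ 2) := by
  set w := √((1 - t) * (1 - s))
  have hw_sq : w ^ 2 = (1 - t) * (1 - s) := Real.sq_sqrt (by nlinarith)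
  have hw : 1 - t ≤ w := Real.le_sqrt_of_sq_le (by nlinarith)
  have key : (1 - (s + w) ^ 2) * t ≤ t ^ 2 - s ^ 2 := by
    nlinarith [mul_nonneg (mul_nonneg hs (sub_nonneg.2 ht1)) (sub_nonneg.2 hst),
      mul_nonneg (mul_nonneg ht.le hs) (sub_nonneg.2 hw)]
  calc √(1 - (f + w) ^ 2) ≤ √((t ^ 2 - s ^ 2) / t) := by
        gcongr
        nlinarith [(le_div_iff₀ ht).2 key, Real.sqrt_nonneg ((1 - t) * (1 - s))]
    _ = 1 / √t * √(t ^ 2 - s ^ 2) := by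
        rw [Real.sqrt_div' _ ht.le, one_div_mul_eq_div]

/-- gentle measurement bound:
P(ρ, ΠρΠ) ≤ (1/√Tr ρ)·√((Tr ρ)² − (Tr(Π²ρ))²) for 0 ≤ Π ≤ I. -/
theorem gentle_measurement {ι : Type*} [Fintype ι] [DecidableEq ι]
    (ρ P : Matrix ι ι ℂ)
    (hρ : ρ.PosSemidef) (hρtr0 : 0 < ρ.trace.re) (hρtr1 : ρ.trace.re ≤ 1)
    (hP : P.PosSemidef) (hPle : ((1 : Matrix ι ι ℂ) - P).PosSemidef) :
    pDist ρ (P * ρ * P) ≤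
      (1 / Real.sqrt ρ.trace.re) *
        Real.sqrt (ρ.trace.re ^ 2 - (((P * P * ρ).trace).re) ^ 2) := by
  have hPP : (P - P ^ 2).PosSemidef := hP.self_sub_sq hPle
  have h_nonneg : 0 ≤ (P * P * ρ).trace.re := by
    simpa [hP.1.eq] using (posSemidef_conjTranspose_mul_self P).trace_mul_nonneg hρ
  have h_le_first : (P * P * ρ).trace.re ≤ (P * ρ).trace.re := by
    have := hPP.trace_mul_nonneg hρ
    rw [sub_mul, trace_sub, Complex.sub_re, sq] at this
    linarith
  have h_le_trace : (P * P * ρ).trace.re ≤ ρ.trace.re := by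
    have := (hPle.add hPP).trace_mul_nonneg hρ
    rw [sub_add_sub_cancel, sub_mul, one_mul, trace_sub, Complex.sub_re, sq] at this
    linarith
  rw [pDist, genFid, traceNorm_msqrt_mul_msqrt_conj hρ hP, trace_mul_cycle]
  exact Real.sqrt_one_sub_sq_add_sqrt_le h_nonneg h_le_first h_le_trace hρtr0 hρtr1
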